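/- arXiv:2103.01194 — 4 statements merged into one kernel-verified Lean document; each statement's English description precedes it below -/
import Mathlib

section
/- For every real t ≥ 0 and every Hermitian d×d complex matrix F, one has ‖exp(tJ) · F · (exp(tJ))ᴴ‖₁ ≤ ‖F‖₁; in particular the superoperator exp(t·𝓛_J) is a contraction in trace norm on Hermitian matrices. -/
open MeasureTheory Filter
open scoped Matrix ComplexOrder

attribute [local instance] Matrix.normedAddCommGroup Matrix.normedSpace

/-- Trace norm (Schatten-1 norm) of a complex matrix: `‖A‖₁ = Tr √(Aᴴ A)`. -/
noncomputable def traceNorm {d : ℕ} (A : Matrix (Fin d) (Fin d) ℂ) : ℝ :=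
  ((Matrix.posSemidef_conjTranspose_mul_self A).1.eigenvectorUnitary.1
    * Matrix.diagonal (fun i => ((Real.sqrt ((Matrix.posSemidef_conjTranspose_mul_self A).1.eigenvalues i) : ℝ) : ℂ))
    * (star (Matrix.posSemidef_conjTranspose_mul_self A).1.eigenvectorUnitary : Matrix (Fin d) (Fin d) ℂ)).trace.re

/-- The superoperator `ρ ↦ A * ρ * B`. -/
noncomputable def sandwich {d : ℕ} (A B : Matrix (Fin d) (Fin d) ℂ) :
    Matrix (Fin d) (Fin d) ℂ →ₗ[ℂ] Matrix (Fin d) (Fin d) ℂ :=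
  (LinearMap.mulLeft ℂ A).comp (LinearMap.mulRight ℂ B)

/-- The completely positive part `𝓛_L(ρ) = ∑ k, L_k ρ L_kᴴ`. -/
noncomputable def LLop {d κ : ℕ} (L : Fin κ → Matrix (Fin d) (Fin d) ℂ) :
    Matrix (Fin d) (Fin d) ℂ →ₗ[ℂ] Matrix (Fin d) (Fin d) ℂ :=
  ∑ k, sandwich (L k) ((L k)ᴴ)

/-- The superoperator `𝓛_J(ρ) = J ρ + ρ Jᴴ`, as a continuous linear endomorphism. -/
noncomputable def LJop {d : ℕ} (J : Matrix (Fin d) (Fin d) ℂ) :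
    Matrix (Fin d) (Fin d) ℂ →L[ℂ] Matrix (Fin d) (Fin d) ℂ :=
  LinearMap.toContinuousLinearMap (LinearMap.mulLeft ℂ J + LinearMap.mulRight ℂ Jᴴ)

/-- The Lindblad generator
`𝓛(ρ) = -i(Hρ - ρH) + ∑ k (L_k ρ L_kᴴ - ½(L_kᴴ L_k ρ + ρ L_kᴴ L_k))`. -/
noncomputable def lindbladOp {d κ : ℕ} (H : Matrix (Fin d) (Fin d) ℂ)
    (L : Fin κ → Matrix (Fin d) (Fin d) ℂ) :
    Matrix (Fin d) (Fin d) ℂ →L[ℂ] Matrix (Fin d) (Fin d) ℂ :=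
  LinearMap.toContinuousLinearMap
    ((-Complex.I) • (LinearMap.mulLeft ℂ H - LinearMap.mulRight ℂ H)
      + ∑ k, (sandwich (L k) ((L k)ᴴ)
          - (1 / 2 : ℂ) • (LinearMap.mulLeft ℂ ((L k)ᴴ * L k)
              + LinearMap.mulRight ℂ ((L k)ᴴ * L k))))

/-! `J + Jᴴ = -∑ₖ L_kᴴ L_k` is negative semidefinite, so `J` is dissipative: the derivative
`2 Re ⟪e^{sJ} y, J e^{sJ} y⟫` of `s ↦ ‖e^{sJ} y‖²` is nonpositive and `A = exp (tJ)` is a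
contraction. For Hermitian `F` with eigenpairs `(μᵢ, uᵢ)` and an orthonormal eigenbasis `(w_j)` of
`A F Aᴴ`, the eigenvalues of `A F Aᴴ` are `ν_j = ∑ᵢ μᵢ |⟪A uᵢ, w_j⟫|²`, so by Parseval
`∑ⱼ |ν_j| ≤ ∑ᵢ |μᵢ| ‖A uᵢ‖² ≤ ∑ᵢ |μᵢ|`. For Hermitian matrices the trace norm is the sum of the
absolute values of the eigenvalues. -/

open scoped InnerProductSpace

section Dissipative

variable {E : Type*} [NormedAddCommGroup E] [InnerProductSpace ℂ E]

lemma HasDerivAt.norm_sq_of_complex {g : ℝ → E} {g' : E} {s : ℝ} (hg : HasDerivAt g g' s) :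
    HasDerivAt (fun s => ‖g s‖ ^ 2) (2 * (⟪g s, g'⟫_ℂ).re) s := by
  have h := Complex.reCLM.hasFDerivAt.comp_hasDerivAt s (hg.inner (𝕜 := ℂ) hg)
  have hf : (fun s => ‖g s‖ ^ 2) = Complex.reCLM ∘ fun t => ⟪g t, g t⟫_ℂ := by
    funext t
    exact (inner_self_eq_norm_sq (𝕜 := ℂ) (g t)).symm
  have hf' : 2 * (⟪g s, g'⟫_ℂ).re = Complex.reCLM (⟪g s, g'⟫_ℂ + ⟪g', g s⟫_ℂ) := by
    rw [Complex.reCLM_apply, ← inner_conj_symm g' (g s), Complex.add_re, Complex.conj_re]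
    ring
  rwa [hf, hf']

variable [CompleteSpace E]

lemma hasDerivAt_exp_ofReal_smul_apply (T : E →L[ℂ] E) (y : E) (s : ℝ) :
    HasDerivAt (fun s : ℝ => NormedSpace.exp ((s : ℂ) • T) y)
      (T (NormedSpace.exp ((s : ℂ) • T) y)) s := by
  have h := ((ContinuousLinearMap.apply ℂ E y).restrictScalars ℝ).hasFDerivAt.comp_hasDerivAt s
    (hasDerivAt_exp_smul_const' (𝕂 := ℝ) T s)
  simpa [Complex.coe_smul, Function.comp_def] using h

lemma norm_exp_smul_apply_le_of_re_inner_nonpos {T : E →L[ℂ] E}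
    (hT : ∀ y, (⟪y, T y⟫_ℂ).re ≤ 0) {t : ℝ} (ht : 0 ≤ t) (y : E) :
    ‖NormedSpace.exp ((t : ℂ) • T) y‖ ≤ ‖y‖ := by
  have hderiv s := (hasDerivAt_exp_ofReal_smul_apply T y s).norm_sq_of_complex
  have hanti : Antitone fun s : ℝ => ‖NormedSpace.exp ((s : ℂ) • T) y‖ ^ 2 :=
    antitone_of_deriv_nonpos (fun s => (hderiv s).differentiableAt) fun s => by
      rw [(hderiv s).deriv]
      linarith [hT (NormedSpace.exp ((s : ℂ) • T) y)]
  have h := hanti ht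
  simp only [Complex.ofReal_zero, zero_smul, NormedSpace.exp_zero, one_apply_eq_self] at h
  exact (pow_le_pow_iff_left₀ (norm_nonneg _) (norm_nonneg _) two_ne_zero).mp h

end Dissipative

namespace Matrix

lemma add_conjTranspose_eq_neg {n : Type*} {H S J : Matrix n n ℂ} (hH : H.IsHermitian)
    (hS : S.IsHermitian) (hJ : J = -(Complex.I • (H - (Complex.I / 2) • S))) : J + Jᴴ = -S := by
  subst hJ
  have hI : Complex.I * (Complex.I / 2) = -(1 / 2) := by
    rw [← mul_div_assoc, Complex.I_mul_I]
    ring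
  simp only [conjTranspose_neg, conjTranspose_smul, conjTranspose_sub, hH.eq, hS.eq,
    smul_sub, smul_smul, Complex.star_def, Complex.conj_I, hI, map_neg, map_div₀, map_one,
    map_ofNat]
  module

variable {𝕜 n : Type*} [RCLike 𝕜] [Fintype n] [DecidableEq n]

lemma toEuclideanCLM_exp (M : Matrix n n 𝕜) :
    toEuclideanCLM (𝕜 := 𝕜) (NormedSpace.exp M) =
      NormedSpace.exp (toEuclideanCLM (𝕜 := 𝕜) M) := by
  let e := (toEuclideanCLM (n := n) (𝕜 := 𝕜)).toAlgEquiv.toLinearEquiv.toContinuousLinearEquiv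
  rw [NormedSpace.exp_eq_tsum_rat, NormedSpace.exp_eq_tsum_rat]
  refine e.map_tsum.trans (tsum_congr fun k => ?_)
  change toEuclideanCLM (𝕜 := 𝕜) ((k.factorial : ℚ)⁻¹ • M ^ k) = _
  rw [map_inv_natCast_smul _ ℚ ℚ, map_pow]

lemma re_inner_toEuclideanLin_self_nonpos {J : Matrix n n 𝕜} (hJ : (-(J + Jᴴ)).PosSemidef)
    (y : EuclideanSpace 𝕜 n) : RCLike.re ⟪y, toEuclideanLin J y⟫_𝕜 ≤ 0 := by
  have h := (isPositive_toEuclideanLin_iff.mpr hJ).re_inner_nonneg_right y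
  rw [map_neg, map_add, toEuclideanLin_conjTranspose_eq_adjoint, LinearMap.neg_apply,
    LinearMap.add_apply, inner_neg_right, inner_add_right, LinearMap.adjoint_inner_right,
    map_neg, map_add, inner_re_symm (toEuclideanLin J y)] at h
  linarith

lemma IsHermitian.trace_cfc {A : Matrix n n 𝕜} (hA : A.IsHermitian) (f : ℝ → ℝ) :
    (cfc f A).trace = ∑ i, ((f (hA.eigenvalues i) : ℝ) : 𝕜) := by
  rw [hA.cfc_eq, Matrix.IsHermitian.cfc, Unitary.conjStarAlgAut_apply, trace_mul_cycle,
    Unitary.coe_star_mul_self, one_mul, trace_diagonal]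
  rfl

lemma IsHermitian.toEuclideanLin_eigenvectorBasis {A : Matrix n n 𝕜} (hA : A.IsHermitian)
    (i : n) :
    toEuclideanLin A (hA.eigenvectorBasis i) = (hA.eigenvalues i : 𝕜) • hA.eigenvectorBasis i :=
  WithLp.ofLp_injective 2 <| by simp [hA.mulVec_eigenvectorBasis]

lemma IsHermitian.inner_toEuclideanLin_self {A : Matrix n n 𝕜} (hA : A.IsHermitian)
    (y : EuclideanSpace 𝕜 n) :
    ⟪y, toEuclideanLin A y⟫_𝕜 =
      ∑ i, (hA.eigenvalues i : 𝕜) * ‖⟪hA.eigenvectorBasis i, y⟫_𝕜‖ ^ 2 := by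
  have hAy : toEuclideanLin A y =
      ∑ i, (⟪hA.eigenvectorBasis i, y⟫_𝕜 * hA.eigenvalues i) • hA.eigenvectorBasis i := by
    conv_lhs => rw [← hA.eigenvectorBasis.sum_repr' y]
    simp only [map_sum, map_smul, hA.toEuclideanLin_eigenvectorBasis, smul_smul]
  rw [hAy, inner_sum]
  refine Finset.sum_congr rfl fun i _ => ?_
  rw [inner_smul_right, ← inner_conj_symm y, mul_right_comm, RCLike.mul_conj, mul_comm]

lemma IsHermitian.eigenvalues_eq_re_inner {A : Matrix n n 𝕜} (hA : A.IsHermitian) (i : n) :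
    hA.eigenvalues i =
      RCLike.re ⟪hA.eigenvectorBasis i, toEuclideanLin A (hA.eigenvectorBasis i)⟫_𝕜 := by
  rw [hA.eigenvalues_eq, dotProduct_comm]
  rfl

lemma IsHermitian.eigenvalues_mul_mul_conjTranspose {A F : Matrix n n 𝕜} (hF : F.IsHermitian)
    (j : n) :
    (isHermitian_mul_mul_conjTranspose A hF).eigenvalues j =
      ∑ i, hF.eigenvalues i * ‖⟪toEuclideanLin A (hF.eigenvectorBasis i),
        (isHermitian_mul_mul_conjTranspose A hF).eigenvectorBasis j⟫_𝕜‖ ^ 2 := by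
  rw [IsHermitian.eigenvalues_eq_re_inner, toLpLin_mul_same, toLpLin_mul_same,
    toEuclideanLin_conjTranspose_eq_adjoint, LinearMap.comp_apply, LinearMap.comp_apply,
    ← LinearMap.adjoint_inner_left, hF.inner_toEuclideanLin_self, map_sum]
  simp only [LinearMap.adjoint_inner_right, RCLike.re_ofReal_mul, ← RCLike.ofReal_pow,
    RCLike.ofReal_re]

lemma sum_abs_eigenvalues_mul_mul_conjTranspose_le {A F : Matrix n n 𝕜} (hF : F.IsHermitian)
    (hA : ∀ x, ‖toEuclideanLin A x‖ ≤ ‖x‖) :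
    ∑ j, |(isHermitian_mul_mul_conjTranspose A hF).eigenvalues j| ≤ ∑ i, |hF.eigenvalues i| := by
  set w := (isHermitian_mul_mul_conjTranspose A hF).eigenvectorBasis
  set u := hF.eigenvectorBasis
  calc ∑ j, |(isHermitian_mul_mul_conjTranspose A hF).eigenvalues j|
      ≤ ∑ j, ∑ i, |hF.eigenvalues i| * ‖⟪toEuclideanLin A (u i), w j⟫_𝕜‖ ^ 2 := by
        refine Finset.sum_le_sum fun j _ => ?_
        rw [hF.eigenvalues_mul_mul_conjTranspose]
        refine (Finset.abs_sum_le_sum_abs _ _).trans_eq (Finset.sum_congr rfl fun i _ => ?_)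
        rw [abs_mul, abs_sq]
    _ = ∑ i, |hF.eigenvalues i| * ‖toEuclideanLin A (u i)‖ ^ 2 := by
        rw [Finset.sum_comm]
        simp only [← Finset.mul_sum, w.sum_sq_norm_inner_left]
    _ ≤ ∑ i, |hF.eigenvalues i| := by
        refine Finset.sum_le_sum fun i _ => mul_le_of_le_one_right (abs_nonneg _) ?_
        simpa [u.norm_eq_one] using pow_le_pow_left₀ (norm_nonneg _) (hA (u i)) 2

end Matrix

lemma traceNorm_eq_re_trace_cfc_sqrt {d : ℕ} (A : Matrix (Fin d) (Fin d) ℂ) :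
    traceNorm A = (cfc Real.sqrt (Aᴴ * A)).trace.re := by
  rw [(Matrix.posSemidef_conjTranspose_mul_self A).1.cfc_eq]
  rfl

lemma Matrix.IsHermitian.traceNorm_eq_sum_abs_eigenvalues {d : ℕ} {A : Matrix (Fin d) (Fin d) ℂ}
    (hA : A.IsHermitian) : traceNorm A = ∑ i, |hA.eigenvalues i| := by
  have hsq : Aᴴ * A = A ^ 2 := by rw [hA.eq, sq]
  have habs : cfc Real.sqrt (A ^ 2) = cfc (fun x : ℝ => |x|) A := by
    rw [← cfc_comp_pow Real.sqrt 2 A]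
    simp only [Real.sqrt_sq_eq_abs]
  rw [traceNorm_eq_re_trace_cfc_sqrt, hsq, habs, hA.trace_cfc, Complex.re_sum]
  rfl

lemma traceNorm_mul_mul_conjTranspose_le {d : ℕ} {A F : Matrix (Fin d) (Fin d) ℂ}
    (hF : F.IsHermitian) (hA : ∀ x, ‖Matrix.toEuclideanLin A x‖ ≤ ‖x‖) :
    traceNorm (A * F * Aᴴ) ≤ traceNorm F := by
  rw [(Matrix.isHermitian_mul_mul_conjTranspose A hF).traceNorm_eq_sum_abs_eigenvalues,
    hF.traceNorm_eq_sum_abs_eigenvalues]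
  exact Matrix.sum_abs_eigenvalues_mul_mul_conjTranspose_le hF hA

theorem traceNorm_exp_kraus_le_general {d κ : ℕ}
    (H : Matrix (Fin d) (Fin d) ℂ) (hH : H.IsHermitian)
    (L : Fin κ → Matrix (Fin d) (Fin d) ℂ)
    (Heff J : Matrix (Fin d) (Fin d) ℂ)
    (hHeff : Heff = H - (Complex.I / 2) • ∑ k, (L k)ᴴ * L k)
    (hJ : J = -(Complex.I • Heff)) :
    ∀ t : ℝ, 0 ≤ t → ∀ F : Matrix (Fin d) (Fin d) ℂ, F.IsHermitian →
      traceNorm (NormedSpace.exp ((t : ℂ) • J) * F * (NormedSpace.exp ((t : ℂ) • J))ᴴ)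
        ≤ traceNorm F := by
  intro t ht F hF
  have hS : (∑ k, (L k)ᴴ * L k).PosSemidef :=
    Matrix.posSemidef_sum _ fun k _ => Matrix.posSemidef_conjTranspose_mul_self (L k)
  have hdiss : ∀ y, (⟪y, Matrix.toEuclideanCLM (𝕜 := ℂ) J y⟫_ℂ).re ≤ 0 :=
    Matrix.re_inner_toEuclideanLin_self_nonpos <| by
      rwa [Matrix.add_conjTranspose_eq_neg hH hS.isHermitian (hHeff ▸ hJ), neg_neg]
  refine traceNorm_mul_mul_conjTranspose_le hF fun x => ?_
  rw [← Matrix.coe_toEuclideanCLM_eq_toEuclideanLin, ContinuousLinearMap.coe_coe,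
    Matrix.toEuclideanCLM_exp, map_smul]
  exact norm_exp_smul_apply_le_of_re_inner_nonpos hdiss ht x

/-- For every `t ≥ 0` and every Hermitian matrix `F`,
`‖exp(tJ) F (exp(tJ))ᴴ‖₁ ≤ ‖F‖₁`: the superoperator `exp(t 𝓛_J)` is a trace-norm
contraction on Hermitian matrices. -/
theorem traceNorm_exp_kraus_le {d κ : ℕ} (hd : 1 ≤ d) (hκ : 1 ≤ κ)
    (H : Matrix (Fin d) (Fin d) ℂ) (hH : H.IsHermitian)
    (L : Fin κ → Matrix (Fin d) (Fin d) ℂ)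
    (Heff J : Matrix (Fin d) (Fin d) ℂ)
    (hHeff : Heff = H - (Complex.I / 2) • ∑ k, (L k)ᴴ * L k)
    (hJ : J = -(Complex.I • Heff)) :
    ∀ t : ℝ, 0 ≤ t → ∀ F : Matrix (Fin d) (Fin d) ℂ, F.IsHermitian →
      traceNorm (NormedSpace.exp ((t : ℂ) • J) * F * (NormedSpace.exp ((t : ℂ) • J))ᴴ)
        ≤ traceNorm F :=
  traceNorm_exp_kraus_le_general H hH L Heff J hHeff hJ
end

section
/- Define the first-order Runge–Kutta scheme 𝓐(ρ) := ρ + Δt·𝓛(ρ). Then the following are equivalent: (i) for every density matrix ρ_0, Tr(σ_X · 𝓐^{∘k}(ρ_0)) → 0 and Tr(σ_Y · 𝓐^{∘k}(ρ_0)) → 0 as k → ∞; (ii) |z − 1| < 1. -/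
open Filter
open scoped Matrix ComplexOrder

/-! The dephasing generator acts diagonally on the off-diagonal entries, multiplying `ρ 0 1` by
`-λ` and `ρ 1 0` by `-conj λ`, so each Euler step multiplies them by `1 - z` and its conjugate.
The `σX` and `σY` expectations determine exactly these two entries, so decay for every density
matrix amounts to `(1 - z) ^ k → 0`, i.e. `‖1 - z‖ < 1`; necessity is seen on the density matrix
with all entries `1 / 2`. -/

noncomputable def lindbladian {n : Type*} [Fintype n] (H L ρ : Matrix n n ℂ) : Matrix n n ℂ :=
  -Complex.I • (H * ρ - ρ * H) + L * ρ * Lᴴ - (1 / 2 : ℂ) • (Lᴴ * L * ρ + ρ * (Lᴴ * L))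

section Dephasing

variable (b c : ℝ) (ρ : Matrix (Fin 2) (Fin 2) ℂ)

lemma lindbladian_dephasing_apply_zero_one :
    lindbladian (((b / 2 : ℝ) : ℂ) • !![1, 0; 0, -1]) ((c : ℂ) • !![1, 0; 0, -1]) ρ 0 1
      = -(2 * c ^ 2 + b * Complex.I) * ρ 0 1 := by
  simp [lindbladian, Matrix.mul_apply, Matrix.vecMul, dotProduct, Fin.sum_univ_two,
    Matrix.conjTranspose_apply, Complex.conj_ofReal]
  ring

lemma lindbladian_dephasing_apply_one_zero :
    lindbladian (((b / 2 : ℝ) : ℂ) • !![1, 0; 0, -1]) ((c : ℂ) • !![1, 0; 0, -1]) ρ 1 0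
      = -(2 * c ^ 2 - b * Complex.I) * ρ 1 0 := by
  simp [lindbladian, Matrix.mul_apply, Matrix.vecMul, dotProduct, Fin.sum_univ_two,
    Matrix.conjTranspose_apply, Complex.conj_ofReal]
  ring

end Dephasing

lemma Function.apply_iterate_eq_pow_mul {β M : Type*} [Monoid M] {f : β → β} {g : β → M}
    {c : M} (h : ∀ x, g (f x) = c * g x) (k : ℕ) (x : β) : g (f^[k] x) = c ^ k * g x := by
  rw [← mul_left_iterate_apply]
  exact Function.Semiconj.iterate_right h k x

lemma trace_pauliX_mul (M : Matrix (Fin 2) (Fin 2) ℂ) :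
    (!![0, 1; 1, 0] * M).trace = M 1 0 + M 0 1 := by
  simp [Matrix.trace, Matrix.vecMul, dotProduct]

lemma trace_pauliY_mul (M : Matrix (Fin 2) (Fin 2) ℂ) :
    (!![0, -Complex.I; Complex.I, 0] * M).trace = Complex.I * (M 0 1 - M 1 0) := by
  simp [Matrix.trace, Matrix.vecMul, dotProduct]
  ring

lemma tendsto_trace_pauliX_mul_and_pauliY_mul_iff {α : Type*} {l : Filter α}
    (M : α → Matrix (Fin 2) (Fin 2) ℂ) :
    (Tendsto (fun k => (!![0, 1; 1, 0] * M k).trace) l (nhds 0) ∧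
      Tendsto (fun k => (!![0, -Complex.I; Complex.I, 0] * M k).trace) l (nhds 0)) ↔
    Tendsto (fun k => M k 0 1) l (nhds 0) ∧ Tendsto (fun k => M k 1 0) l (nhds 0) := by
  simp only [trace_pauliX_mul, trace_pauliY_mul]
  constructor
  · rintro ⟨hX, hY⟩
    have h01 := (hX.sub (hY.const_mul Complex.I)).div_const 2
    have h10 := (hX.add (hY.const_mul Complex.I)).div_const 2
    simp only [mul_zero, sub_zero, add_zero, zero_div] at h01 h10
    refine ⟨h01.congr fun k => ?_, h10.congr fun k => ?_⟩
    · linear_combination (M k 1 0 - M k 0 1) / 2 * Complex.I_sq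
    · linear_combination (M k 0 1 - M k 1 0) / 2 * Complex.I_sq
  · rintro ⟨h01, h10⟩
    refine ⟨by simpa using h10.add h01, by simpa using (h01.sub h10).const_mul Complex.I⟩

lemma exists_density_matrix_apply_zero_one_ne_zero :
    ∃ ρ : Matrix (Fin 2) (Fin 2) ℂ, ρ.PosSemidef ∧ ρ.trace = 1 ∧ ρ 0 1 ≠ 0 := by
  refine ⟨(1 / 2 : ℝ) • Matrix.vecMulVec 1 (star 1),
    (Matrix.posSemidef_vecMulVec_self_star 1).smul (by norm_num), ?_, ?_⟩ <;>
    norm_num [Matrix.trace, Fin.sum_univ_two, Matrix.vecMulVec_apply]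

lemma tendsto_pow_mul_const_nhds_zero_iff {w c : ℂ} (hc : c ≠ 0) :
    Tendsto (fun k : ℕ => w ^ k * c) atTop (nhds 0) ↔ ‖w‖ < 1 := by
  rw [← tendsto_pow_atTop_nhds_zero_iff_norm_lt_one]
  refine ⟨fun h => ?_, fun h => by simpa using h.mul_const c⟩
  simpa [hc] using h.mul_const c⁻¹

theorem abs_stability_RK1_general
    (a b Δt : ℝ) (ha : 0 < a) (z : ℂ)
    (hz : z = ((a : ℂ) + (b : ℂ) * Complex.I) * (Δt : ℂ))
    (σX σY σZ H L : Matrix (Fin 2) (Fin 2) ℂ)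
    (hσX : σX = !![0, 1; 1, 0])
    (hσY : σY = !![0, -Complex.I; Complex.I, 0])
    (hσZ : σZ = !![1, 0; 0, -1])
    (hH : H = ((b / 2 : ℝ) : ℂ) • σZ)
    (hL : L = (Real.sqrt (a / 2) : ℂ) • σZ)
    (𝓛 : Matrix (Fin 2) (Fin 2) ℂ → Matrix (Fin 2) (Fin 2) ℂ)
    (h𝓛 : 𝓛 = fun ρ => -Complex.I • (H * ρ - ρ * H) + L * ρ * Lᴴ
        - (1 / 2 : ℂ) • (Lᴴ * L * ρ + ρ * (Lᴴ * L)))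
    (𝓐 : Matrix (Fin 2) (Fin 2) ℂ → Matrix (Fin 2) (Fin 2) ℂ)
    (h𝓐 : 𝓐 = fun ρ => ρ + (Δt : ℂ) • 𝓛 ρ) :
    (∀ ρ0 : Matrix (Fin 2) (Fin 2) ℂ, ρ0.PosSemidef → ρ0.trace = 1 →
        Tendsto (fun k => (σX * 𝓐^[k] ρ0).trace) atTop (nhds 0) ∧
        Tendsto (fun k => (σY * 𝓐^[k] ρ0).trace) atTop (nhds 0))
      ↔ ‖z - 1‖ < 1 := by
  subst hσX hσY
  have hc : 2 * ((Real.sqrt (a / 2) : ℝ) : ℂ) ^ 2 = a := by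
    rw [← Complex.ofReal_pow, Real.sq_sqrt (by positivity)]
    push_cast
    ring
  have h01 (ρ : Matrix (Fin 2) (Fin 2) ℂ) : 𝓐 ρ 0 1 = (1 - z) * ρ 0 1 := by
    subst h𝓐 h𝓛 hH hL hσZ hz
    change ρ 0 1 + Δt * lindbladian _ _ ρ 0 1 = _
    rw [lindbladian_dephasing_apply_zero_one, hc]
    ring
  have h10 (ρ : Matrix (Fin 2) (Fin 2) ℂ) : 𝓐 ρ 1 0 = starRingEnd ℂ (1 - z) * ρ 1 0 := by
    subst h𝓐 h𝓛 hH hL hσZ hz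
    change ρ 1 0 + Δt * lindbladian _ _ ρ 1 0 = _
    rw [lindbladian_dephasing_apply_one_zero, hc]
    simp only [map_sub, map_one, map_mul, map_add, Complex.conj_ofReal, Complex.conj_I]
    ring
  simp_rw [tendsto_trace_pauliX_mul_and_pauliY_mul_iff,
    Function.apply_iterate_eq_pow_mul (f := 𝓐) (g := (· 0 1)) h01,
    Function.apply_iterate_eq_pow_mul (f := 𝓐) (g := (· 1 0)) h10]
  rw [norm_sub_rev]
  constructor
  · intro h
    obtain ⟨ρ, hρ, htr, hρ01⟩ := exists_density_matrix_apply_zero_one_ne_zero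
    exact (tendsto_pow_mul_const_nhds_zero_iff hρ01).1 (h ρ hρ htr).1
  · intro h ρ _ _
    have hconj : ‖starRingEnd ℂ (1 - z)‖ < 1 := by rwa [Complex.norm_conj]
    exact ⟨by simpa using (tendsto_pow_atTop_nhds_zero_of_norm_lt_one h).mul_const (ρ 0 1),
      by simpa using (tendsto_pow_atTop_nhds_zero_of_norm_lt_one hconj).mul_const (ρ 1 0)⟩

/-- Absolute stability of the first-order Runge–Kutta scheme (Theorem 9 of the paper):
the off-diagonal observables decay for every density matrix iff `|z - 1| < 1`. -/
theorem abs_stability_RK1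
    (a b Δt : ℝ) (ha : 0 < a) (hΔt : 0 < Δt) (z : ℂ)
    (hz : z = ((a : ℂ) + (b : ℂ) * Complex.I) * (Δt : ℂ))
    (σX σY σZ H L : Matrix (Fin 2) (Fin 2) ℂ)
    (hσX : σX = !![0, 1; 1, 0])
    (hσY : σY = !![0, -Complex.I; Complex.I, 0])
    (hσZ : σZ = !![1, 0; 0, -1])
    (hH : H = ((b / 2 : ℝ) : ℂ) • σZ)
    (hL : L = (Real.sqrt (a / 2) : ℂ) • σZ)
    (𝓛 : Matrix (Fin 2) (Fin 2) ℂ → Matrix (Fin 2) (Fin 2) ℂ)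
    (h𝓛 : 𝓛 = fun ρ => -Complex.I • (H * ρ - ρ * H) + L * ρ * Lᴴ
        - (1 / 2 : ℂ) • (Lᴴ * L * ρ + ρ * (Lᴴ * L)))
    (𝓐 : Matrix (Fin 2) (Fin 2) ℂ → Matrix (Fin 2) (Fin 2) ℂ)
    (h𝓐 : 𝓐 = fun ρ => ρ + (Δt : ℂ) • 𝓛 ρ) :
    (∀ ρ0 : Matrix (Fin 2) (Fin 2) ℂ, ρ0.PosSemidef → ρ0.trace = 1 →
        Tendsto (fun k => (σX * 𝓐^[k] ρ0).trace) atTop (nhds 0) ∧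
        Tendsto (fun k => (σY * 𝓐^[k] ρ0).trace) atTop (nhds 0))
      ↔ ‖z - 1‖ < 1 :=
  abs_stability_RK1_general a b Δt ha z hz σX σY σZ H L hσX hσY hσZ hH hL 𝓛 h𝓛 𝓐 h𝓐
end

section
/- Define the normalized midpoint second-order structure-preserving scheme by 𝓐_un(ρ) := (I + ΔtJ + (Δt²/2)J²) · ρ · (I + ΔtJ + (Δt²/2)J²)ᴴ + Δt · (I + (Δt/2)J) · L · ((I + (Δt/2)J) · ρ · (I + (Δt/2)J)ᴴ) · Lᴴ · (I + (Δt/2)J)ᴴ + (Δt²/2) · L (L ρ Lᴴ) Lᴴ and 𝓐(ρ) := 𝓐_un(ρ)/Tr(𝓐_un(ρ)). Then the following are equivalent: (i) for every density matrix ρ_0, Tr(σ_X · 𝓐^{∘k}(ρ_0)) → 0 and Tr(σ_Y · 𝓐^{∘k}(ρ_0)) → 0 as k → ∞; (ii) z ≠ 4 + 2i and z ≠ 4 − 2i and z ≠ 8. -/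
open Filter
open scoped Matrix ComplexOrder

/-!
Everything is diagonal in the eigenbasis of `σ_Z`: `J = diag(g, ḡ)` with `g = -(a + 2ib)/4` and
`L = ℓ σ_Z` with `ℓ² = a/2`. Writing `w = Δt g`, `τ = Δt ℓ²`, `p = 1 + w + w²/2` and
`q = 1 + w/2`, one unnormalised step multiplies both populations by
`c = |p|² + τ|q|⁴ + τ²/2` and the coherence `ρ₀₁` by `n = p² - τq⁴ + τ²/2`. After normalisation
the coherence is multiplied by `ν = n/c` at every step, so the Pauli expectations decay for every
state iff `|ν| < 1`. By the triangle inequality `|n| ≤ c`, with equality only if `p² ≥ 0` and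
`q⁴ ≤ 0`, i.e. `Im p = 0` and `Re q² = 0`; these two real equations single out
`z ∈ {4 + 2i, 4 - 2i, 8}`, where indeed `n = c`.
-/

open ComplexConjugate

namespace Complex

theorem norm_sub_add_ofReal_le (P Q : ℂ) {R : ℝ} (hR : 0 ≤ R) :
    ‖P - Q + R‖ ≤ ‖P‖ + ‖Q‖ + R := by
  calc ‖P - Q + R‖ ≤ ‖P‖ + ‖-Q‖ + ‖(R : ℂ)‖ := by rw [sub_eq_add_neg]; exact norm_add₃_le
    _ = ‖P‖ + ‖Q‖ + R := by rw [norm_neg, norm_real, Real.norm_of_nonneg hR]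

theorem nonneg_and_nonpos_of_norm_sub_add_ofReal_eq {P Q : ℂ} {R : ℝ} (hR : 0 < R)
    (h : ‖P - Q + R‖ = ‖P‖ + ‖Q‖ + R) : 0 ≤ P ∧ Q ≤ 0 := by
  rw [show P - Q + R = P + ((R : ℂ) + -Q) by ring] at h
  have hRQ_le := norm_add_le (R : ℂ) (-Q)
  have hP_le := norm_add_le P ((R : ℂ) + -Q)
  rw [norm_neg, norm_real, Real.norm_of_nonneg hR.le] at hRQ_le
  obtain ⟨r, hr, hQ⟩ : ∃ r : ℝ, 0 ≤ r ∧ r • (R : ℂ) = -Q := by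
    refine (sameRay_iff_norm_add.mpr (le_antisymm (norm_add_le _ _) ?_)).exists_nonneg_left
      (ofReal_ne_zero.mpr hR.ne')
    rw [norm_neg, norm_real, Real.norm_of_nonneg hR.le]
    linarith
  have hRQ : (R : ℂ) + -Q = ((R + r * R : ℝ) : ℂ) := by
    rw [← hQ, real_smul]; push_cast; ring
  obtain ⟨t, ht, hP⟩ : ∃ t : ℝ, 0 ≤ t ∧ t • ((R : ℂ) + -Q) = P := by
    refine (sameRay_iff_norm_add.mpr (le_antisymm (norm_add_le _ _) ?_)).symm.exists_nonneg_left
      (by rw [hRQ]; exact ofReal_ne_zero.mpr (by positivity))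
    linarith
  constructor
  · rw [← hP, hRQ, real_smul, ← ofReal_mul]
    exact zero_le_real.mpr (by positivity)
  · rw [← neg_neg Q, ← hQ, real_smul, ← ofReal_mul, ← ofReal_neg, ← ofReal_zero, real_le_real]
    nlinarith

end Complex

namespace SP2Midpoint

open Complex

noncomputable section

def coherenceGain (w : ℂ) (τ : ℝ) : ℂ :=
  (1 + w + w ^ 2 / 2) ^ 2 - τ * (1 + w / 2) ^ 4 + τ ^ 2 / 2

def populationGain (w : ℂ) (τ : ℝ) : ℝ :=
  ‖1 + w + w ^ 2 / 2‖ ^ 2 + τ * ‖1 + w / 2‖ ^ 4 + τ ^ 2 / 2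

def coherenceScaling (c : ℝ) (n : ℂ) (ρ : Matrix (Fin 2) (Fin 2) ℂ) : Matrix (Fin 2) (Fin 2) ℂ :=
  !![c * ρ 0 0, n * ρ 0 1; conj n * ρ 1 0, c * ρ 1 1]

def unnormalizedStep (Δt : ℝ) (J L ρ : Matrix (Fin 2) (Fin 2) ℂ) : Matrix (Fin 2) (Fin 2) ℂ :=
  (1 + Δt • J + (Δt ^ 2 / 2) • J ^ 2) * ρ * (1 + Δt • J + (Δt ^ 2 / 2) • J ^ 2)ᴴ
    + Δt • ((1 + (Δt / 2) • J) * L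
        * ((1 + (Δt / 2) • J) * ρ * (1 + (Δt / 2) • J)ᴴ)
        * Lᴴ * (1 + (Δt / 2) • J)ᴴ)
    + (Δt ^ 2 / 2) • (L * (L * ρ * Lᴴ) * Lᴴ)

end

variable {w : ℂ} {τ : ℝ}

theorem ofReal_populationGain :
    (populationGain w τ : ℂ) = (1 + w + w ^ 2 / 2) * conj (1 + w + w ^ 2 / 2)
      + τ * ((1 + w / 2) * conj (1 + w / 2)) ^ 2 + τ ^ 2 / 2 := by
  simp only [populationGain, mul_conj, normSq_eq_norm_sq]
  push_cast; ring

theorem neg_I_smul_effHamiltonian (β ℓ : ℝ) :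
    -(I • ((β : ℂ) • !![1, 0; 0, -1] - (I / 2) •
      (((ℓ : ℂ) • !![1, 0; 0, -1])ᴴ * ((ℓ : ℂ) • !![1, 0; 0, -1])))) =
      !![-(ℓ ^ 2 / 2 : ℂ) - β * I, 0; 0, conj (-(ℓ ^ 2 / 2 : ℂ) - β * I)] := by
  ext i j
  fin_cases i <;> fin_cases j <;>
    simp [Matrix.mul_apply, Fin.sum_univ_two, map_ofNat, -Matrix.cons_mul, -Matrix.cons_vecMul,
      -Matrix.vecMul_cons] <;>
    linear_combination ((ℓ : ℂ) ^ 2 / 2) * I_sq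

theorem unnormalizedStep_eq_coherenceScaling (Δt : ℝ) (g : ℂ) (ℓ : ℝ) :
    unnormalizedStep Δt !![g, 0; 0, conj g] ((ℓ : ℂ) • !![1, 0; 0, -1]) =
      coherenceScaling (populationGain (Δt * g) (Δt * ℓ ^ 2))
        (coherenceGain (Δt * g) (Δt * ℓ ^ 2)) := by
  funext ρ
  ext i j
  fin_cases i <;> fin_cases j <;>
    simp [unnormalizedStep, coherenceScaling, coherenceGain, ofReal_populationGain,
      Matrix.mul_apply, Fin.sum_univ_two, Matrix.conjTranspose_apply, Matrix.one_apply, pow_two,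
      map_ofNat, -Matrix.cons_mul, -Matrix.cons_vecMul, -Matrix.vecMul_cons] <;> ring

theorem trace_coherenceScaling (c : ℝ) (n : ℂ) (ρ : Matrix (Fin 2) (Fin 2) ℂ) :
    (coherenceScaling c n ρ).trace = c * ρ.trace := by
  simp only [coherenceScaling, Matrix.trace_fin_two, Matrix.of_apply, Matrix.cons_val',
    Matrix.cons_val_zero, Matrix.cons_val_one, Matrix.cons_val_fin_one]
  ring

theorem coherenceScaling_coherenceScaling (c c' : ℝ) (n n' : ℂ) (ρ : Matrix (Fin 2) (Fin 2) ℂ) :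
    coherenceScaling c n (coherenceScaling c' n' ρ) = coherenceScaling (c * c') (n * n') ρ := by
  ext i j
  fin_cases i <;> fin_cases j <;> simp [coherenceScaling] <;> ring

theorem inv_trace_smul_coherenceScaling {c : ℝ} (hc : c ≠ 0) (n : ℂ)
    {ρ : Matrix (Fin 2) (Fin 2) ℂ} (hρ : ρ.trace = 1) :
    (coherenceScaling c n ρ).trace⁻¹ • coherenceScaling c n ρ = coherenceScaling 1 (n / c) ρ := by
  have hc' : (c : ℂ) ≠ 0 := ofReal_ne_zero.mpr hc
  rw [trace_coherenceScaling, hρ, mul_one]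
  ext i j
  fin_cases i <;> fin_cases j <;>
    simp only [coherenceScaling, Fin.zero_eta, Fin.mk_one, Matrix.smul_apply, Matrix.of_apply,
      Matrix.cons_val', Matrix.cons_val_zero, Matrix.cons_val_one, Matrix.cons_val_fin_one,
      smul_eq_mul, ofReal_one, one_mul, map_div₀, conj_ofReal] <;>
    field_simp

theorem iterate_eq_coherenceScaling {𝓐 : Matrix (Fin 2) (Fin 2) ℂ → Matrix (Fin 2) (Fin 2) ℂ}
    {ν : ℂ} (h𝓐 : ∀ ρ, ρ.trace = 1 → 𝓐 ρ = coherenceScaling 1 ν ρ)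
    {ρ : Matrix (Fin 2) (Fin 2) ℂ} (hρ : ρ.trace = 1) (k : ℕ) :
    𝓐^[k] ρ = coherenceScaling 1 (ν ^ k) ρ := by
  induction k with
  | zero => ext i j; fin_cases i <;> fin_cases j <;> simp [coherenceScaling]
  | succ k ih =>
    rw [Function.iterate_succ_apply', ih, h𝓐 _ (by rw [trace_coherenceScaling, hρ]; simp),
      coherenceScaling_coherenceScaling, pow_succ', one_mul]

theorem trace_pauliX_mul (ρ : Matrix (Fin 2) (Fin 2) ℂ) :
    (!![0, 1; 1, 0] * ρ).trace = ρ 0 1 + ρ 1 0 := by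
  simp [Matrix.trace_fin_two, Matrix.vecMul, dotProduct, add_comm]

theorem trace_pauliY_mul (ρ : Matrix (Fin 2) (Fin 2) ℂ) :
    (!![0, -I; I, 0] * ρ).trace = I * ρ 0 1 - I * ρ 1 0 := by
  simp [Matrix.trace_fin_two, Matrix.vecMul, dotProduct, sub_eq_neg_add]

theorem tendsto_pauli_traces_iff (ν : ℂ) :
    (∀ ρ0 : Matrix (Fin 2) (Fin 2) ℂ, ρ0.PosSemidef → ρ0.trace = 1 →
        Tendsto (fun k => (!![0, 1; 1, 0] * coherenceScaling 1 (ν ^ k) ρ0).trace) atTop (nhds 0) ∧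
        Tendsto (fun k => (!![0, -I; I, 0] * coherenceScaling 1 (ν ^ k) ρ0).trace) atTop (nhds 0))
      ↔ ‖ν‖ < 1 := by
  simp only [trace_pauliX_mul, trace_pauliY_mul, coherenceScaling, Matrix.of_apply,
    Matrix.cons_val', Matrix.cons_val_zero, Matrix.cons_val_one, Matrix.empty_val',
    Matrix.cons_val_fin_one, map_pow]
  constructor
  · intro h
    have hρ0 : (!![1 / 2, 1 / 2; 1 / 2, 1 / 2] : Matrix (Fin 2) (Fin 2) ℂ).PosSemidef := by
      convert (Matrix.posSemidef_vecMulVec_self_star ![(1 : ℂ), 1]).smul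
        (by norm_num : (0 : ℝ) ≤ 1 / 2)
      ext i j
      rw [Matrix.smul_apply, Matrix.vecMulVec_apply]
      fin_cases i <;> fin_cases j <;> simp
    obtain ⟨hX, hY⟩ := h _ hρ0 (by simp [Matrix.trace_fin_two]; norm_num)
    refine tendsto_pow_atTop_nhds_zero_iff_norm_lt_one.mp ?_
    have := hX.sub (hY.const_mul I)
    rw [mul_zero, sub_zero] at this
    refine this.congr fun k ↦ ?_
    simp only [Matrix.of_apply, Matrix.cons_val', Matrix.cons_val_one, Matrix.cons_val_fin_one,
      Matrix.cons_val_zero]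
    linear_combination (conj ν ^ k - ν ^ k) / 2 * I_sq
  · intro hν ρ0 _ _
    have hpow := tendsto_pow_atTop_nhds_zero_of_norm_lt_one hν
    have hpow' := tendsto_pow_atTop_nhds_zero_of_norm_lt_one ((norm_conj ν).symm ▸ hν)
    constructor
    · simpa using (hpow.mul_const (ρ0 0 1)).add (hpow'.mul_const (ρ0 1 0))
    · simpa using ((hpow.mul_const (ρ0 0 1)).const_mul I).sub
        ((hpow'.mul_const (ρ0 1 0)).const_mul I)

theorem populationGain_pos (hτ : 0 < τ) : 0 < populationGain w τ := by
  unfold populationGain; positivity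

theorem coherenceGain_eq_sub_add :
    coherenceGain w τ = (1 + w + w ^ 2 / 2) ^ 2 - τ * (1 + w / 2) ^ 4 + ((τ ^ 2 / 2 : ℝ) : ℂ) := by
  rw [coherenceGain]; push_cast; ring

theorem populationGain_eq_norm_add (hτ : 0 ≤ τ) :
    populationGain w τ = ‖(1 + w + w ^ 2 / 2) ^ 2‖ + ‖(τ : ℂ) * (1 + w / 2) ^ 4‖ + τ ^ 2 / 2 := by
  rw [populationGain, norm_pow, norm_mul, norm_pow, norm_real, Real.norm_of_nonneg hτ]

theorem norm_coherenceGain_le (hτ : 0 ≤ τ) : ‖coherenceGain w τ‖ ≤ populationGain w τ := by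
  rw [coherenceGain_eq_sub_add, populationGain_eq_norm_add hτ]
  exact norm_sub_add_ofReal_le _ _ (by positivity)

variable {z : ℂ}

theorem eq_of_norm_coherenceGain_eq (hz : 0 < z.re) (hw : w = -(z.re / 2 + z.im * I) / 2)
    (hτ : τ = z.re / 2) (h : ‖coherenceGain w τ‖ = populationGain w τ) :
    z = 4 + 2 * I ∨ z = 4 - 2 * I ∨ z = 8 := by
  have hτ_pos : 0 < τ := by rw [hτ]; positivity
  rw [coherenceGain_eq_sub_add, populationGain_eq_norm_add hτ_pos.le] at h
  obtain ⟨hp, hq⟩ := nonneg_and_nonpos_of_norm_sub_add_ofReal_eq (by positivity) h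
  have hp_im : (1 + w + w ^ 2 / 2).im = 0 := sq_nonneg_iff.mp hp
  have hq_re : ((1 + w / 2) ^ 2).re = 0 := by
    rw [← sq_nonpos_iff, ← pow_mul, nonpos_iff]
    obtain ⟨hre, him⟩ := nonpos_iff.mp hq
    rw [re_ofReal_mul] at hre
    rw [im_ofReal_mul, mul_eq_zero] at him
    exact ⟨nonpos_of_mul_nonpos_right hre hτ_pos, him.resolve_left hτ_pos.ne'⟩
  subst hw
  simp only [pow_two] at hp_im hq_re
  simp only [add_im, add_re, one_im, one_re, div_ofNat_im, div_ofNat_re, neg_im, neg_re, mul_im,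
    mul_re, ofReal_re, ofReal_im, I_im, I_re] at hp_im hq_re
  have hy : z.im * (z.re - 4) = 0 := by linear_combination 8 * hp_im
  have hx : (z.re - 8) ^ 2 = 4 * z.im ^ 2 := by linear_combination 64 * hq_re
  simp only [Complex.ext_iff, add_re, sub_re, add_im, sub_im, mul_re, mul_im, re_ofNat, im_ofNat,
    I_re, I_im]
  rcases mul_eq_zero.mp hy with hy | hx4
  · rw [hy] at hx
    have : z.re = 8 := by nlinarith
    norm_num [this, hy]
  · have hx4 : z.re = 4 := by linarith
    rw [hx4] at hx
    have : (z.im - 2) * (z.im + 2) = 0 := by linear_combination -hx / 4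
    rcases mul_eq_zero.mp this with h | h
    · left; constructor <;> linarith
    · right; left; constructor <;> linarith

theorem coherenceGain_eq_populationGain (hw : w = -(z.re / 2 + z.im * I) / 2)
    (hτ : τ = z.re / 2) (hz : z = 4 + 2 * I ∨ z = 4 - 2 * I ∨ z = 8) :
    coherenceGain w τ = populationGain w τ := by
  have h4 : ‖1 + w / 2‖ ^ 4 = (‖1 + w / 2‖ ^ 2) ^ 2 := by ring
  rw [coherenceGain, populationGain, h4, Complex.sq_norm, Complex.sq_norm, normSq_apply,
    normSq_apply]
  subst hw hτ
  rcases hz with rfl | rfl | rfl <;> norm_num [Complex.ext_iff, pow_succ]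

theorem norm_coherenceGain_lt_iff (hz : 0 < z.re) (hw : w = -(z.re / 2 + z.im * I) / 2)
    (hτ : τ = z.re / 2) :
    ‖coherenceGain w τ‖ < populationGain w τ ↔ z ≠ 4 + 2 * I ∧ z ≠ 4 - 2 * I ∧ z ≠ 8 := by
  have hτ_pos : 0 < τ := by rw [hτ]; positivity
  simp only [ne_eq, ← not_or]
  constructor
  · intro hlt hbad
    rw [coherenceGain_eq_populationGain hw hτ hbad, norm_real,
      Real.norm_of_nonneg (populationGain_pos hτ_pos).le] at hlt
    exact lt_irrefl _ hlt
  · exact fun hgood ↦ (norm_coherenceGain_le hτ_pos.le).lt_of_ne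
      fun h ↦ hgood (eq_of_norm_coherenceGain_eq hz hw hτ h)

end SP2Midpoint

theorem abs_stability_SP2_MP_general
    (a b Δt : ℝ) (ha : 0 < a) (hΔt : 0 < Δt) (z : ℂ)
    (hz : z = ((a : ℂ) + (b : ℂ) * Complex.I) * (Δt : ℂ))
    (σX σY σZ H L : Matrix (Fin 2) (Fin 2) ℂ)
    (hσX : σX = !![0, 1; 1, 0])
    (hσY : σY = !![0, -Complex.I; Complex.I, 0])
    (hσZ : σZ = !![1, 0; 0, -1])
    (hH : H = ((b / 2 : ℝ) : ℂ) • σZ)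
    (hL : L = (Real.sqrt (a / 2) : ℂ) • σZ)
    (Heff J : Matrix (Fin 2) (Fin 2) ℂ)
    (hHeff : Heff = H - (Complex.I / 2) • (Lᴴ * L))
    (hJ : J = -(Complex.I • Heff))
    (𝓐un 𝓐 : Matrix (Fin 2) (Fin 2) ℂ → Matrix (Fin 2) (Fin 2) ℂ)
    (h𝓐un : 𝓐un = fun ρ =>
      (1 + Δt • J + (Δt ^ 2 / 2) • J ^ 2) * ρ * (1 + Δt • J + (Δt ^ 2 / 2) • J ^ 2)ᴴ
        + Δt • ((1 + (Δt / 2) • J) * L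
            * ((1 + (Δt / 2) • J) * ρ * (1 + (Δt / 2) • J)ᴴ)
            * Lᴴ * (1 + (Δt / 2) • J)ᴴ)
        + (Δt ^ 2 / 2) • (L * (L * ρ * Lᴴ) * Lᴴ))
    (h𝓐 : 𝓐 = fun ρ => ((𝓐un ρ).trace)⁻¹ • 𝓐un ρ) :
    (∀ ρ0 : Matrix (Fin 2) (Fin 2) ℂ, ρ0.PosSemidef → ρ0.trace = 1 →
        Tendsto (fun k => (σX * 𝓐^[k] ρ0).trace) atTop (nhds 0) ∧
        Tendsto (fun k => (σY * 𝓐^[k] ρ0).trace) atTop (nhds 0))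
      ↔ (z ≠ 4 + 2 * Complex.I ∧ z ≠ 4 - 2 * Complex.I ∧ z ≠ 8) := by
  open SP2Midpoint Complex in
  subst hσX hσY hσZ hH hL hHeff
  set ℓ := Real.sqrt (a / 2)
  have hℓ : ℓ ^ 2 = a / 2 := Real.sq_sqrt (by positivity)
  set g : ℂ := -(ℓ ^ 2 / 2 : ℂ) - ((b / 2 : ℝ) : ℂ) * I
  set w := Δt * g
  set τ := Δt * ℓ ^ 2
  have hz_re : z.re = a * Δt := by simp [hz]
  have hz_im : z.im = b * Δt := by simp [hz]
  have hw : w = -(z.re / 2 + z.im * I) / 2 := by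
    rw [hz_re, hz_im]; push_cast [w, g, ← ofReal_pow, hℓ]; ring
  have hτ : τ = z.re / 2 := by simp only [τ, hℓ, hz_re]; ring
  have hz_pos : 0 < z.re := hz_re ▸ mul_pos ha hΔt
  have hc := populationGain_pos (w := w) (hτ ▸ half_pos hz_pos)
  have hstep : 𝓐un = coherenceScaling (populationGain w τ) (coherenceGain w τ) := by
    rw [h𝓐un, hJ, neg_I_smul_effHamiltonian]
    exact unnormalizedStep_eq_coherenceScaling Δt g ℓ
  have hnormalized : ∀ ρ : Matrix (Fin 2) (Fin 2) ℂ, ρ.trace = 1 →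
      𝓐 ρ = coherenceScaling 1 (coherenceGain w τ / populationGain w τ) ρ := fun ρ hρ ↦ by
    rw [h𝓐, hstep]
    exact inv_trace_smul_coherenceScaling hc.ne' _ hρ
  calc _ ↔ _ := forall_congr' fun ρ0 ↦ forall_congr' fun _ ↦ forall_congr' fun hρ0 ↦ by
          simp_rw [iterate_eq_coherenceScaling hnormalized hρ0]
    _ ↔ ‖coherenceGain w τ / populationGain w τ‖ < 1 := tendsto_pauli_traces_iff _
    _ ↔ ‖coherenceGain w τ‖ < populationGain w τ := by
          rw [norm_div, norm_real, Real.norm_of_nonneg hc.le, div_lt_one hc]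
    _ ↔ _ := norm_coherenceGain_lt_iff hz_pos hw hτ

/-- Absolute stability of the normalized midpoint second-order structure-preserving
scheme (Theorem 9 of the paper): decay holds for every density matrix iff
`z ∉ {4 + 2i, 4 - 2i, 8}`. -/
theorem abs_stability_SP2_MP
    (a b Δt : ℝ) (ha : 0 < a) (hΔt : 0 < Δt) (z : ℂ)
    (hz : z = ((a : ℂ) + (b : ℂ) * Complex.I) * (Δt : ℂ))
    (σX σY σZ H L : Matrix (Fin 2) (Fin 2) ℂ)
    (hσX : σX = !![0, 1; 1, 0])
    (hσY : σY = !![0, -Complex.I; Complex.I, 0])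
    (hσZ : σZ = !![1, 0; 0, -1])
    (hH : H = ((b / 2 : ℝ) : ℂ) • σZ)
    (hL : L = (Real.sqrt (a / 2) : ℂ) • σZ)
    (𝓛 : Matrix (Fin 2) (Fin 2) ℂ → Matrix (Fin 2) (Fin 2) ℂ)
    (h𝓛 : 𝓛 = fun ρ => -Complex.I • (H * ρ - ρ * H) + L * ρ * Lᴴ
        - (1 / 2 : ℂ) • (Lᴴ * L * ρ + ρ * (Lᴴ * L)))
    (Heff J : Matrix (Fin 2) (Fin 2) ℂ)
    (hHeff : Heff = H - (Complex.I / 2) • (Lᴴ * L))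
    (hJ : J = -(Complex.I • Heff))
    (𝓐un 𝓐 : Matrix (Fin 2) (Fin 2) ℂ → Matrix (Fin 2) (Fin 2) ℂ)
    (h𝓐un : 𝓐un = fun ρ =>
      (1 + Δt • J + (Δt ^ 2 / 2) • J ^ 2) * ρ * (1 + Δt • J + (Δt ^ 2 / 2) • J ^ 2)ᴴ
        + Δt • ((1 + (Δt / 2) • J) * L
            * ((1 + (Δt / 2) • J) * ρ * (1 + (Δt / 2) • J)ᴴ)
            * Lᴴ * (1 + (Δt / 2) • J)ᴴ)
        + (Δt ^ 2 / 2) • (L * (L * ρ * Lᴴ) * Lᴴ))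
    (h𝓐 : 𝓐 = fun ρ => ((𝓐un ρ).trace)⁻¹ • 𝓐un ρ) :
    (∀ ρ0 : Matrix (Fin 2) (Fin 2) ℂ, ρ0.PosSemidef → ρ0.trace = 1 →
        Tendsto (fun k => (σX * 𝓐^[k] ρ0).trace) atTop (nhds 0) ∧
        Tendsto (fun k => (σY * 𝓐^[k] ρ0).trace) atTop (nhds 0))
      ↔ (z ≠ 4 + 2 * Complex.I ∧ z ≠ 4 - 2 * Complex.I ∧ z ≠ 8) :=
  abs_stability_SP2_MP_general a b Δt ha hΔt z hz σX σY σZ H L hσX hσY hσZ hH hL Heff J hHeff hJ 𝓐un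
    𝓐 h𝓐un h𝓐
end

section
/- Let Φ be the linear endomorphism of the space of 2×2 complex matrices given by Φ(ρ) := σ_X ρ σ_X. Then for every real t < 0 there exists a 2×2 positive semidefinite complex matrix ρ with trace 1 such that exp(t·Φ)(ρ) is not positive semidefinite; that is, exp(t·Φ) is not positivity-preserving for any t < 0. -/
/-!
Since `σ_X² = 1`, `Φ` is an involution, so `exp (t Φ) = cosh t + sinh t Φ`. On the pure state
`ρ = diag(1, 0)` this gives `diag(cosh t, sinh t)`, whose entry `sinh t` is negative for `t < 0`.
-/

open scoped Matrix ComplexOrder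

attribute [local instance] Matrix.normedAddCommGroup Matrix.normedSpace

instance matrixFin2CLMIsTopologicalRing :
    IsTopologicalRing (Matrix (Fin 2) (Fin 2) ℂ →L[ℂ] Matrix (Fin 2) (Fin 2) ℂ) :=
  letI : NormedRing (Matrix (Fin 2) (Fin 2) ℂ →L[ℂ] Matrix (Fin 2) (Fin 2) ℂ) :=
    @ContinuousLinearMap.toNormedRing ℂ (Matrix (Fin 2) (Fin 2) ℂ) _ _ _
  @NonUnitalSeminormedRing.toIsTopologicalRing _ inferInstance

namespace ContinuousLinearMap

variable {𝕂 E : Type*} [RCLike 𝕂] [NormedAddCommGroup E] [NormedSpace 𝕂 E]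

theorem pow_apply_of_apply_eq_smul {A : E →L[𝕂] E} {c : 𝕂} {x : E} (h : A x = c • x) (n : ℕ) :
    (A ^ n) x = c ^ n • x := by
  induction n with
  | zero => simp
  | succ n ih => rw [pow_succ', mul_apply_eq_comp, ih, map_smul, h, smul_smul, pow_succ]

theorem exp_apply_of_apply_eq_smul [CompleteSpace E] {A : E →L[𝕂] E} {c : 𝕂} {x : E}
    (h : A x = c • x) : NormedSpace.exp A x = NormedSpace.exp c • x := by
  have hA := (NormedSpace.exp_series_hasSum_exp' (𝕂 := 𝕂) A).mapL (apply 𝕂 E x)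
  have hc := (NormedSpace.exp_series_hasSum_exp' (𝕂 := 𝕂) c).smul_const x
  refine hA.unique ?_
  simpa only [apply_apply, _root_.smul_apply, pow_apply_of_apply_eq_smul h, smul_smul,
    smul_eq_mul] using hc

end ContinuousLinearMap

theorem exp_smul_apply_of_apply_apply_eq {E : Type*} [NormedAddCommGroup E] [NormedSpace ℂ E]
    [CompleteSpace E] {A : E →L[ℂ] E} {x : E} (h : A (A x) = x) (c : ℂ) :
    NormedSpace.exp (c • A) x = Complex.cosh c • x + Complex.sinh c • A x := by
  -- `x ± A x` are eigenvectors of `c • A` with eigenvalues `±c`.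
  have hplus : (c • A) (x + A x) = c • (x + A x) := by
    rw [smul_apply, map_add, h, add_comm]
  have hminus : (c • A) (x - A x) = (-c) • (x - A x) := by
    rw [smul_apply, map_sub, h, neg_smul, ← smul_neg, neg_sub]
  have hx : x = (2⁻¹ : ℂ) • ((x + A x) + (x - A x)) := by
    rw [add_add_sub_cancel, ← two_smul ℂ x, smul_smul, inv_mul_cancel₀ two_ne_zero, one_smul]
  conv_lhs => rw [hx]
  rw [map_smul, map_add, ContinuousLinearMap.exp_apply_of_apply_eq_smul hplus,
    ContinuousLinearMap.exp_apply_of_apply_eq_smul hminus, ← Complex.exp_eq_exp_ℂ,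
    Complex.cosh, Complex.sinh]
  module

theorem sigmaX_mul_diag_mul_sigmaX {R : Type*} [NonAssocSemiring R] (a b : R) :
    !![0, 1; 1, 0] * !![a, 0; 0, b] * !![0, 1; 1, 0] = !![b, 0; 0, a] := by
  simp

/-- `exp(t Φ)` with `Φ(ρ) = σ_X ρ σ_X` is not positivity-preserving for any `t < 0`:
for every `t < 0` there is a density matrix `ρ` such that `exp(t Φ)(ρ)` is not
positive semidefinite. -/
theorem exp_sigmaX_sandwich_not_posPreserving
    (Φ : Matrix (Fin 2) (Fin 2) ℂ →L[ℂ] Matrix (Fin 2) (Fin 2) ℂ)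
    (hΦ : ∀ ρ : Matrix (Fin 2) (Fin 2) ℂ, Φ ρ = !![0, 1; 1, 0] * ρ * !![0, 1; 1, 0]) :
    ∀ t : ℝ, t < 0 →
      ∃ ρ : Matrix (Fin 2) (Fin 2) ℂ, ρ.PosSemidef ∧ ρ.trace = 1 ∧
        ¬ ((NormedSpace.exp ((t : ℂ) • Φ)) ρ).PosSemidef := by
  intro t ht
  have hΦ₁₁ : Φ !![1, 0; 0, 0] = !![0, 0; 0, 1] :=
    (hΦ _).trans (sigmaX_mul_diag_mul_sigmaX 1 0)
  have hΦ₂₂ : Φ !![0, 0; 0, 1] = !![1, 0; 0, 0] :=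
    (hΦ _).trans (sigmaX_mul_diag_mul_sigmaX 0 1)
  have hexp : NormedSpace.exp ((t : ℂ) • Φ) !![1, 0; 0, 0]
      = Complex.cosh t • !![1, 0; 0, 0] + Complex.sinh t • !![0, 0; 0, 1] := by
    rw [← hΦ₁₁]
    exact exp_smul_apply_of_apply_apply_eq ((congrArg Φ hΦ₁₁).trans hΦ₂₂) _
  refine ⟨!![1, 0; 0, 0], ?_, by simp [Matrix.trace_fin_two], fun hpsd => ?_⟩
  · rw [← Matrix.diagonal_vec2]
    exact Matrix.posSemidef_diagonal_iff.2 (by simp [Fin.forall_fin_two])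
  · have hsinh := hpsd.diag_nonneg (i := 1)
    rw [hexp] at hsinh
    simp [← Complex.ofReal_sinh] at hsinh
    linarith
end
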